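/- Let n₀ ≥ 1 be an integer and L ≥ 1 a real. Consider the instance with n = n₀ + 1 jobs of sizes d_i = 1 for 1 ≤ i ≤ n₀ and d_n = L, so D = n₀ + L; set ε̂ = n₀/D. For any integer 0 ≤ k ≤ n₀, with ε = ε_k = k/D, the expected social cost of the k-th Pareto schedule satisfies c(A^k) = (D/2)·(ε + ε̂D − ε(1 − ε̂)D + 2), and the optimal social cost satisfies c(A*) = (D/2)·(ε̂²D + ε̂ + 2). -/

import Mathlib

/-- Expected social cost of the `k`-th Pareto schedule `A^k` (0-indexed). -/
noncomputable def paretoCost {n : ℕ} (d : Fin n → ℝ) (k : ℕ) : ℝ :=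
  ∑ i : Fin n,
    if (i : ℕ) < k then ∑ ℓ ∈ Finset.univ.filter (fun ℓ : Fin n => ℓ ≤ i), d ℓ
    else (∑ ℓ ∈ Finset.univ.filter (fun ℓ : Fin n => (ℓ : ℕ) < k), d ℓ) +
      (((∑ ℓ : Fin n, d ℓ) - ∑ ℓ ∈ Finset.univ.filter (fun ℓ : Fin n => (ℓ : ℕ) < k), d ℓ)
        + d i) / 2

/-- Optimal (Smith's rule) social cost `∑ i (n - i + 1) d_i`, written 0-indexed. -/
noncomputable def smithCost {n : ℕ} (d : Fin n → ℝ) : ℝ :=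
  ∑ i : Fin n, ((n : ℝ) - ((i : ℕ) : ℝ)) * d i

open Finset in
lemma sum_range_cast_real (m : ℕ) : ∑ j ∈ Finset.range m, (j : ℝ) = (m : ℝ) * ((m : ℝ) - 1) / 2 := by
  induction m with
  | zero => simp
  | succ m ih => rw [Finset.sum_range_succ, ih]; push_cast; ring

lemma fin_filter_sum {n : ℕ} (k : ℕ) (hk : k ≤ n) (f : ℕ → ℝ) :
    ∑ i ∈ Finset.univ.filter (fun ℓ : Fin n => (ℓ : ℕ) < k), f (i : ℕ)
      = ∑ j ∈ Finset.range k, f j := by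
  rw [Finset.sum_filter]
  rw [Fin.sum_univ_eq_sum_range (fun j => if j < k then f j else 0)]
  rw [← Finset.sum_filter]
  congr 1
  ext j; simp only [Finset.mem_filter, Finset.mem_range]
  constructor
  · rintro ⟨_, h⟩; exact h
  · intro h; exact ⟨lt_of_lt_of_le h hk, h⟩


/-- For the instance with `n₀ ≥ 1` unit jobs and one job of size `L ≥ 1`
(so `n = n₀ + 1`, `D = n₀ + L`, `ε̂ = n₀/D`), and any `0 ≤ k ≤ n₀` with
`ε = ε_k = k/D`, the `k`-th Pareto schedule has expected social cost
`c(A^k) = (D/2)(ε + ε̂D - ε(1 - ε̂)D + 2)` and the optimal social cost is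
`c(A*) = (D/2)(ε̂²D + ε̂ + 2)`. -/
theorem pareto_cost_unit_jobs_instance (n₀ : ℕ) (hn₀ : 1 ≤ n₀) (L : ℝ) (hL : 1 ≤ L)
    (d : Fin (n₀ + 1) → ℝ) (hd : ∀ i, d i = if (i : ℕ) < n₀ then 1 else L)
    (D : ℝ) (hD : D = (n₀ : ℝ) + L)
    (εhat : ℝ) (hεhat : εhat = (n₀ : ℝ) / D)
    (k : ℕ) (hk : k ≤ n₀) (ε : ℝ) (hε : ε = (k : ℝ) / D) :
    paretoCost d k = D / 2 * (ε + εhat * D - ε * (1 - εhat) * D + 2) ∧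
    smithCost d = D / 2 * (εhat ^ 2 * D + εhat + 2) := by
  have hD0 : D ≠ 0 := by
    have : (0:ℝ) < D := by rw [hD]; positivity
    linarith
  -- total sum
  have htot : ∑ ℓ : Fin (n₀ + 1), d ℓ = D := by
    rw [Fin.sum_univ_castSucc]
    have h1 : ∀ i : Fin n₀, d i.castSucc = 1 := by
      intro i; rw [hd]; simp [i.isLt]
    have h2 : d (Fin.last n₀) = L := by rw [hd]; simp
    simp [h1, h2, hD]
  -- prefix sum
  have hpre : ∑ ℓ ∈ Finset.univ.filter (fun ℓ : Fin (n₀+1) => (ℓ : ℕ) < k), d ℓ = (k : ℝ) := by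
    have : ∀ ℓ ∈ Finset.univ.filter (fun ℓ : Fin (n₀+1) => (ℓ : ℕ) < k), d ℓ = 1 := by
      intro ℓ hℓ
      simp only [Finset.mem_filter] at hℓ
      rw [hd]; simp [lt_of_lt_of_le hℓ.2 hk]
    rw [Finset.sum_congr rfl this, Finset.sum_const, nsmul_eq_mul, mul_one]
    congr 1
    rw [show Finset.univ.filter (fun ℓ : Fin (n₀+1) => (ℓ:ℕ) < k) = Finset.Iio ⟨k, by omega⟩ by
      ext x; simp [Fin.lt_def]]
    simp [Fin.card_Iio]
  -- inner sums for i < k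
  have hinner : ∀ i : Fin (n₀+1), (i : ℕ) < k →
      ∑ ℓ ∈ Finset.univ.filter (fun ℓ : Fin (n₀+1) => ℓ ≤ i), d ℓ = (i : ℕ) + 1 := by
    intro i hi
    have : ∀ ℓ ∈ Finset.univ.filter (fun ℓ : Fin (n₀+1) => ℓ ≤ i), d ℓ = 1 := by
      intro ℓ hℓ
      simp only [Finset.mem_filter] at hℓ
      rw [hd]
      have : (ℓ : ℕ) < n₀ := lt_of_le_of_lt (Fin.le_def.mp hℓ.2) (lt_of_lt_of_le hi hk)
      simp [this]
    rw [Finset.sum_congr rfl this, Finset.sum_const, nsmul_eq_mul, mul_one]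
    rw [show Finset.univ.filter (fun ℓ : Fin (n₀+1) => ℓ ≤ i) = Finset.Iic i by ext; simp]
    simp [Fin.card_Iic]
  constructor
  · -- pareto cost
    rw [paretoCost, htot, hpre]
    rw [Finset.sum_ite]
    have hA : ∑ i ∈ Finset.univ.filter (fun i : Fin (n₀+1) => (i:ℕ) < k),
        (∑ ℓ ∈ Finset.univ.filter (fun ℓ : Fin (n₀+1) => ℓ ≤ i), d ℓ)
        = (k:ℝ) * ((k:ℝ) + 1) / 2 := by
      rw [Finset.sum_congr rfl (fun i hi => by
        simp only [Finset.mem_filter] at hi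
        exact hinner i hi.2)]
      rw [fin_filter_sum k (by omega) (fun j => (j:ℝ) + 1)]
      rw [Finset.sum_add_distrib, sum_range_cast_real]
      simp; ring
    rw [hA]
    have hcard : (Finset.univ.filter (fun i : Fin (n₀+1) => ¬ (i:ℕ) < k)).card = n₀ + 1 - k := by
      rw [Finset.filter_not, Finset.card_sdiff_of_subset (Finset.filter_subset _ _)]
      simp only [Finset.card_univ, Fintype.card_fin]
      congr 1
      rw [show Finset.univ.filter (fun ℓ : Fin (n₀+1) => (ℓ:ℕ) < k) = Finset.Iio ⟨k, by omega⟩ by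
        ext x; simp [Fin.lt_def]]
      simp [Fin.card_Iio]
    have hcomp : ∑ i ∈ Finset.univ.filter (fun i : Fin (n₀+1) => ¬ (i:ℕ) < k), d i
        = D - (k:ℝ) := by
      have := Finset.sum_filter_add_sum_filter_not Finset.univ
        (fun i : Fin (n₀+1) => (i:ℕ) < k) d
      rw [hpre] at this
      rw [htot] at this
      linarith
    have hB : ∑ i ∈ Finset.univ.filter (fun i : Fin (n₀+1) => ¬ (i:ℕ) < k),
        ((k:ℝ) + ((D - (k:ℝ)) + d i) / 2)
        = ((n₀:ℝ) + 1 - (k:ℝ)) * ((k:ℝ) + (D - (k:ℝ)) / 2) + (D - (k:ℝ)) / 2 := by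
      have : ∀ i : Fin (n₀+1), (k:ℝ) + ((D - (k:ℝ)) + d i) / 2
          = ((k:ℝ) + (D - (k:ℝ)) / 2) + d i / 2 := by intro i; ring
      rw [Finset.sum_congr rfl (fun i _ => this i), Finset.sum_add_distrib,
        Finset.sum_const, hcard, ← Finset.sum_div, hcomp, nsmul_eq_mul]
      have : ((n₀ + 1 - k : ℕ) : ℝ) = (n₀:ℝ) + 1 - (k:ℝ) := by
        push_cast [Nat.cast_sub (by omega : k ≤ n₀ + 1)]; ring
      rw [this]
    rw [hB, hε, hεhat, hD]
    field_simp
    ring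
  · -- smith cost
    rw [smithCost, Fin.sum_univ_castSucc]
    have h1 : ∀ i : Fin n₀, d i.castSucc = 1 := by
      intro i; rw [hd]; simp [i.isLt]
    have h2 : d (Fin.last n₀) = L := by rw [hd]; simp
    simp only [h1, h2, mul_one]
    rw [show ∑ i : Fin n₀, (((n₀ + 1 : ℕ):ℝ) - ((i.castSucc : ℕ):ℝ))
        = ∑ j ∈ Finset.range n₀, (((n₀ + 1 : ℕ):ℝ) - (j:ℝ)) by
      simp only [Fin.coe_castSucc]
      exact Fin.sum_univ_eq_sum_range (fun j => ((n₀ + 1 : ℕ):ℝ) - (j:ℝ)) n₀]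
    rw [Finset.sum_sub_distrib, sum_range_cast_real, Finset.sum_const, nsmul_eq_mul, Finset.card_range]
    simp only [Fin.val_last]
    rw [hεhat, hD]
    field_simp
    push_cast; ring
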